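/- arXiv:1910.09317 — 8 statements merged into one kernel-verified Lean document; each statement's English description precedes it below -/
import Mathlib

section
/- In a rack Q, the relation α defined by a α b ⟺ b = L_a^k(a) for some integer k is an equivalence relation on Q. -/
/-!
In a rack the translations satisfy `L (L a x) = L a * L x * (L a)⁻¹`, so powers of `L a` act on
the translations by conjugation with powers of `L a`. Since `L a` commutes with its own powers,
every point `(L a ^ k) a` of the orbit of `a` has the same translation `L a` as `a` itself; the
orbits of `a` under `L a` and of `b := (L a ^ k) a` under `L b` are therefore the same set.
-/

open Equiv

section

variable {Q G : Type*} [Group G]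

def intertwiningPairs (f : Q → G) : Subgroup (Perm Q × G) where
  carrier := {p | ∀ x, f (p.1 x) = p.2 * f x * p.2⁻¹}
  one_mem' x := by simp
  mul_mem' {p q} hp hq x := by
    rw [Prod.fst_mul, Prod.snd_mul, Perm.mul_apply, hp (q.1 x), hq x]
    group
  inv_mem' {p} hp x := by
    have h := hp (p.1⁻¹ x)
    rw [Perm.coe_inv, apply_symm_apply] at h
    rw [Prod.fst_inv, Prod.snd_inv, Perm.coe_inv, h]
    group

theorem apply_zpow_apply_eq_conj {f : Q → G} {σ : Perm Q} {g : G}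
    (h : ∀ x, f (σ x) = g * f x * g⁻¹) (k : ℤ) (x : Q) :
    f ((σ ^ k) x) = g ^ k * f x * (g ^ k)⁻¹ :=
  zpow_mem (show (σ, g) ∈ intertwiningPairs f from h) k x

theorem translation_apply_eq_conj {op : Q → Q → Q}
    (hdist : ∀ x y z, op x (op y z) = op (op x y) (op x z))
    {L : Q → Perm Q} (hL : ∀ a x, L a x = op a x) (a x : Q) :
    L (L a x) = L a * L x * (L a)⁻¹ := by
  ext y
  have hy : op a ((L a)⁻¹ y) = y := by rw [← hL, Perm.coe_inv, apply_symm_apply]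
  simp only [Perm.mul_apply, hL]
  rw [hdist, hy]

variable {L : Q → Perm Q}

theorem translation_zpow_apply_self (hconj : ∀ a x, L (L a x) = L a * L x * (L a)⁻¹)
    (a : Q) (k : ℤ) : L ((L a ^ k) a) = L a := by
  rw [apply_zpow_apply_eq_conj (hconj a) k a, ((Commute.refl (L a)).zpow_left k).mul_inv_cancel]

theorem equivalence_orbit_of_own_translation
    (hconj : ∀ a x, L (L a x) = L a * L x * (L a)⁻¹) :
    Equivalence (fun a b : Q => ∃ k : ℤ, b = (L a ^ k) a) where
  refl a := ⟨0, rfl⟩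
  symm := by
    rintro a b ⟨k, rfl⟩
    refine ⟨-k, ?_⟩
    rw [translation_zpow_apply_self hconj, ← Perm.mul_apply, ← zpow_add, neg_add_cancel, zpow_zero,
      Perm.one_apply]
  trans := by
    rintro a b c ⟨k, rfl⟩ ⟨m, rfl⟩
    exact ⟨m + k, by rw [translation_zpow_apply_self hconj, zpow_add, Perm.mul_apply]⟩

end

theorem orbit_of_own_translation_equivalence_general
    {Q : Type*} (op : Q → Q → Q)
    (hdist : ∀ x y z, op x (op y z) = op (op x y) (op x z))
    (L : Q → Equiv.Perm Q) (hL : ∀ a x, L a x = op a x) :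
    Equivalence (fun a b : Q => ∃ k : ℤ, b = ((L a) ^ k) a) :=
  equivalence_orbit_of_own_translation (translation_apply_eq_conj hdist hL)

/-- In a rack `Q`, the relation `a α b ⟺ ∃ k : ℤ, b = L_a^k(a)` is an
equivalence relation on `Q`. -/
theorem orbit_of_own_translation_equivalence
    {Q : Type*} (op : Q → Q → Q)
    (hbij : ∀ a, Function.Bijective (op a))
    (hdist : ∀ x y z, op x (op y z) = op (op x y) (op x z))
    (L : Q → Equiv.Perm Q) (hL : ∀ a x, L a x = op a x) :
    Equivalence (fun a b : Q => ∃ k : ℤ, b = ((L a) ^ k) a) :=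
  orbit_of_own_translation_equivalence_general op hdist L hL
end

section
/- In a rack Q, the map s : Q → Q defined by s(a) = a*a is an automorphism of Q, i.e., s is bijective and s(a*b) = s(a)*s(b) for all a, b. -/
/-- In a rack `Q`, the squaring map `s : a ↦ a*a` is an automorphism of `Q`:
it is bijective and multiplicative. -/
theorem squaring_map_is_automorphism
    {Q : Type*} (op : Q → Q → Q)
    (hbij : ∀ a, Function.Bijective (op a))
    (hdist : ∀ x y z, op x (op y z) = op (op x y) (op x z)) :
    Function.Bijective (fun a : Q => op a a) ∧
      ∀ a b : Q, op (op a b) (op a b) = op (op a a) (op b b) := by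
  -- key: L_{a*a} = L_a
  have key : ∀ a y : Q, op (op a a) y = op a y := by
    intro a y
    obtain ⟨w, rfl⟩ := (hbij a).2 y
    exact (hdist a a w).symm
  have mult : ∀ a b : Q, op (op a b) (op a b) = op (op a a) (op b b) := by
    intro a b
    rw [key, ← hdist]
  refine ⟨⟨?_, ?_⟩, mult⟩
  · intro a b h
    simp only at h
    -- L_a = L_b
    have hL : ∀ y, op a y = op b y := by
      intro y
      rw [← key a y, h, key]
    have : op a b = op a a := by rw [hL b, ← h]
    exact ((hbij a).1 this.symm)
  · intro c
    obtain ⟨a, ha⟩ := (hbij c).2 c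
    refine ⟨a, ?_⟩
    have : op c (op a a) = op c c := by rw [hdist, ha]
    exact (hbij c).1 this
end

section
/- Let Q be a left quasigroup and α a congruence of Q contained in the Cayley kernel λ_Q. Then α is strongly abelian: for every term t(x, y_1, …, y_n), whenever u α v, a_i α b_i α c_i for all i, and t(u, a_1, …, a_n) = t(v, b_1, …, b_n), it follows that t(u, c_1, …, c_n) = t(v, c_1, …, c_n). -/
/-- Terms in the language of left quasigroups in variables `x, y_1, …, y_n`,
with `x` a distinguished variable. -/
inductive LQTerm (n : ℕ) : Type
  | x : LQTerm n
  | y (i : Fin n) : LQTerm n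
  | mul (t s : LQTerm n) : LQTerm n
  | ld (t s : LQTerm n) : LQTerm n

/-- Evaluation of a term at `x := u`, `y_i := a i`, using operations `op` and `ld`. -/
def LQTerm.eval {Q : Type*} (op ld : Q → Q → Q) {n : ℕ} :
    LQTerm n → Q → (Fin n → Q) → Q
  | .x, u, _ => u
  | .y i, _, a => a i
  | .mul t s, u, a => op (t.eval op ld u a) (s.eval op ld u a)
  | .ld t s, u, a => ld (t.eval op ld u a) (s.eval op ld u a)

/-- Evaluation respects a congruence. -/
lemma LQTerm.eval_congr {Q : Type*} (op ld : Q → Q → Q)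
    (α : Q → Q → Prop)
    (hcmul : ∀ a b c d, α a b → α c d → α (op a c) (op b d))
    (hcld : ∀ a b c d, α a b → α c d → α (ld a c) (ld b d))
    {n : ℕ} (t : LQTerm n) (u v : Q) (a b : Fin n → Q)
    (huv : α u v) (hab : ∀ i, α (a i) (b i)) :
    α (t.eval op ld u a) (t.eval op ld v b) := by
  induction t with
  | x => exact huv
  | y i => exact hab i
  | mul t s iht ihs => exact hcmul _ _ _ _ iht ihs
  | ld t s iht ihs => exact hcld _ _ _ _ iht ihs

/-- Let `Q` be a left quasigroup and `α` a congruence of `Q` contained in the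
Cayley kernel. Then `α` is strongly abelian. -/
theorem congruence_below_cayley_is_strongly_abelian
    {Q : Type*} (op ld : Q → Q → Q)
    (h1 : ∀ x y, op x (ld x y) = y) (h2 : ∀ x y, ld x (op x y) = y)
    (α : Q → Q → Prop) (hα : Equivalence α)
    (hcmul : ∀ a b c d, α a b → α c d → α (op a c) (op b d))
    (hcld : ∀ a b c d, α a b → α c d → α (ld a c) (ld b d))
    (hlam : ∀ a b, α a b → op a = op b) :
    ∀ (n : ℕ) (t : LQTerm n) (u v : Q) (a b c : Fin n → Q),
      α u v → (∀ i, α (a i) (b i)) → (∀ i, α (b i) (c i)) →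
      t.eval op ld u a = t.eval op ld v b →
      t.eval op ld u c = t.eval op ld v c := by
  -- α also lies in the kernel of `ld`
  have hldlam : ∀ p q, α p q → ld p = ld q := by
    intro p q hpq
    have hopq := hlam p q hpq
    funext y
    calc ld p y = ld p (op q (ld q y)) := by rw [h1]
    _ = ld p (op p (ld q y)) := by rw [hopq]
    _ = ld q y := h2 _ _
  intro n t u v a b c huv hab hbc heq
  have hac : ∀ i, α (a i) (c i) := fun i => hα.trans (hab i) (hbc i)
  induction t with
  | x => exact heq
  | y i => rfl
  | mul t s iht ihs =>
    -- the left-translation functions at the two points agree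
    have hrel : α (t.eval op ld u a) (t.eval op ld v b) :=
      LQTerm.eval_congr op ld α hcmul hcld t u v a b huv hab
    have hop : op (t.eval op ld u a) = op (t.eval op ld v b) := hlam _ _ hrel
    have hs : s.eval op ld u a = s.eval op ld v b := by
      have heq' : op (t.eval op ld u a) (s.eval op ld u a)
           = op (t.eval op ld v b) (s.eval op ld v b) := heq
      rw [← hop] at heq'
      have := congrArg (ld (t.eval op ld u a)) heq'
      rwa [h2, h2] at this
    have hrelc : α (t.eval op ld u c) (t.eval op ld v c) :=
      LQTerm.eval_congr op ld α hcmul hcld t u v c c huv (fun i => hα.refl _)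
    have hopc : op (t.eval op ld u c) = op (t.eval op ld v c) := hlam _ _ hrelc
    show op _ _ = op _ _
    rw [hopc, ihs hs]
  | ld t s iht ihs =>
    have hrel : α (t.eval op ld u a) (t.eval op ld v b) :=
      LQTerm.eval_congr op ld α hcmul hcld t u v a b huv hab
    have hld : ld (t.eval op ld u a) = ld (t.eval op ld v b) := hldlam _ _ hrel
    have hs : s.eval op ld u a = s.eval op ld v b := by
      have heq' : ld (t.eval op ld u a) (s.eval op ld u a)
           = ld (t.eval op ld v b) (s.eval op ld v b) := heq
      rw [← hld] at heq'
      have := congrArg (op (t.eval op ld u a)) heq'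
      rwa [h1, h1] at this
    have hrelc : α (t.eval op ld u c) (t.eval op ld v c) :=
      LQTerm.eval_congr op ld α hcmul hcld t u v c c huv (fun i => hα.refl _)
    have hldc : ld (t.eval op ld u c) = ld (t.eval op ld v c) := hldlam _ _ hrelc
    show ld _ _ = ld _ _
    rw [hldc, ihs hs]
end

section
/- Let Q be a left quasigroup and α a strongly abelian congruence of Q. Then α is contained in the Cayley kernel: a α b implies L_a = L_b. -/
/-- A strongly abelian congruence of a left quasigroup is contained in the
Cayley kernel: `a α b` implies `L_a = L_b`. -/
theorem strongly_abelian_congruence_below_cayley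
    {Q : Type*} (op ld : Q → Q → Q)
    (h1 : ∀ x y, op x (ld x y) = y) (h2 : ∀ x y, ld x (op x y) = y)
    (α : Q → Q → Prop) (hα : Equivalence α)
    (hcmul : ∀ a b c d, α a b → α c d → α (op a c) (op b d))
    (hcld : ∀ a b c d, α a b → α c d → α (ld a c) (ld b d))
    (hsab : ∀ (n : ℕ) (t : LQTerm n) (u v : Q) (a b c : Fin n → Q),
      α u v → (∀ i, α (a i) (b i)) → (∀ i, α (b i) (c i)) →
      t.eval op ld u a = t.eval op ld v b →
      t.eval op ld u c = t.eval op ld v c) :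
    ∀ a b : Q, α a b → op a = op b := by
  intro a b hab
  funext z
  have key := hsab 1 (LQTerm.mul .x (.y 0)) a b
    (fun _ => ld a (op b z)) (fun _ => ld b (op b z)) (fun _ => ld b (op b z))
    hab (fun _ => hcld _ _ _ _ hab (hα.refl _)) (fun _ => hα.refl _)
  simp only [LQTerm.eval, h1] at key
  have := key trivial
  rwa [h2] at this
end

section
/- A left quasigroup Q (with operations * and \) is strongly abelian (i.e., its full congruence 1_Q is strongly abelian) if and only if Q is a permutation left quasigroup, meaning a*c = b*c for all a, b, c ∈ Q. -/
/-- A left quasigroup is strongly abelian (the full congruence is strongly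
abelian) if and only if it is a permutation left quasigroup, i.e. `a*c = b*c`
for all `a, b, c`. -/
theorem strongly_abelian_iff_permutation
    {Q : Type*} (op ld : Q → Q → Q)
    (h1 : ∀ x y, op x (ld x y) = y) (h2 : ∀ x y, ld x (op x y) = y) :
    (∀ (n : ℕ) (t : LQTerm n) (u v : Q) (a b c : Fin n → Q),
        t.eval op ld u a = t.eval op ld v b →
        t.eval op ld u c = t.eval op ld v c) ↔
      (∀ a b c : Q, op a c = op b c) := by
  constructor
  · intro hSA a b c
    have h := hSA 1 (.mul .x (.y 0)) a b (fun _ => ld a c) (fun _ => ld b c)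
      (fun _ => c) (by simp [LQTerm.eval, h1])
    simpa [LQTerm.eval] using h
  · intro hperm
    -- ld is also independent of its first argument
    have hld : ∀ a b c : Q, ld a c = ld b c := by
      intro a b c
      have : c = op a (ld b c) := by rw [hperm a b (ld b c), h1]
      rw [this, h2, ← this, ← h1 b c]
    intro n t
    induction t with
    | x => intro u v a b c h; simpa [LQTerm.eval] using h
    | y i => intro u v a b c h; simp [LQTerm.eval]
    | mul t s iht ihs =>
        intro u v a b c h
        simp only [LQTerm.eval] at h ⊢
        have hs : s.eval op ld u a = s.eval op ld v b := by
          have := congrArg (ld u) h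
          rwa [hperm _ u _, h2, hperm _ u (s.eval op ld v b), h2] at this
        rw [ihs u v a b c hs]
        exact hperm _ _ _
    | ld t s iht ihs =>
        intro u v a b c h
        simp only [LQTerm.eval] at h ⊢
        have hs : s.eval op ld u a = s.eval op ld v b := by
          have := congrArg (op u) h
          rwa [hld _ u _, h1, hld _ u (s.eval op ld v b), h1] at this
        rw [ihs u v a b c hs]
        exact hld _ _ _
end

section
/- Let E be a connected rack and α a congruence of E with α ≤ λ_E, such that E/α satisfies an inner identity of the form L_{x_{i_1}}^{k_1} ⋯ L_{x_{i_m}}^{k_m}(y) = y. If for some choice of elements a_1, …, a_n ∈ E the map h = L_{a_{i_1}}^{k_1} ⋯ L_{a_{i_m}}^{k_m} has a fixed point in E, then h is the identity on E. -/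
/-- Let `E` be a connected rack and `α ≤ λ_E` a congruence such that `E/α`
satisfies the inner identity `L_{x_{i_1}}^{k_1} ⋯ L_{x_{i_m}}^{k_m}(y) = y`.
If for some choice of elements the corresponding map `h` has a fixed point,
then `h` is the identity on `E`. -/
theorem inner_identity_fixed_point_implies_identity
    {E : Type*} (op ld : E → E → E)
    (h1 : ∀ x y, op x (ld x y) = y) (h2 : ∀ x y, ld x (op x y) = y)
    (hdist : ∀ x y z, op x (op y z) = op (op x y) (op x z))
    -- E is connected
    (hconn : ∀ a b : E,
      ∃ g ∈ Subgroup.closure {σ : Equiv.Perm E | ∃ c, ∀ x, σ x = op c x},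
        g a = b)
    (α : E → E → Prop) (hα : Equivalence α)
    (hcmul : ∀ a b c d, α a b → α c d → α (op a c) (op b d))
    (hcld : ∀ a b c d, α a b → α c d → α (ld a c) (ld b d))
    (hlam : ∀ a b, α a b → op a = op b)
    (L : E → Equiv.Perm E) (hL : ∀ a x, L a x = op a x)
    (m : ℕ) (k : Fin m → ℤ)
    -- E/α satisfies the inner identity with exponents k
    (hid : ∀ (b : Fin m → E) (y : E),
      α (((List.ofFn fun i => (L (b i)) ^ (k i)).prod) y) y)
    -- a choice of elements for the variables
    (w : Fin m → E)
    (hfix : ∃ x : E, ((List.ofFn fun i => (L (w i)) ^ (k i)).prod) x = x) :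
    ∀ x : E, ((List.ofFn fun i => (L (w i)) ^ (k i)).prod) x = x := by
  set S : Set (Equiv.Perm E) := {σ : Equiv.Perm E | ∃ c, ∀ x, σ x = op c x} with hS
  set G := Subgroup.closure S with hG
  set h : Equiv.Perm E := (List.ofFn fun i => (L (w i)) ^ (k i)).prod with hh
  -- inverse of L a is ld a
  have hLinv : ∀ a x, (L a)⁻¹ x = ld a x := by
    intro a x
    have : L a (ld a x) = x := by rw [hL]; exact h1 a x
    have := congrArg (⇑(L a)⁻¹) this
    simpa using this.symm
  -- conjugation formula for elements of G
  have key : ∀ g ∈ G, ∀ a, g * L a * g⁻¹ = L (g a) := by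
    intro g hg
    induction hg using Subgroup.closure_induction with
    | mem σ hσ =>
        obtain ⟨c, hc⟩ := hσ
        have hσL : σ = L c := Equiv.ext fun x => (hc x).trans (hL c x).symm
        intro a
        subst hσL
        refine Equiv.ext fun x => ?_
        simp only [Equiv.Perm.mul_apply, hL, hLinv]
        calc op c (op a (ld c x)) = op (op c a) (op c (ld c x)) := hdist c a (ld c x)
          _ = op (op c a) x := by rw [h1]
    | one => intro a; simp
    | mul g₁ g₂ hg₁ hg₂ ih₁ ih₂ =>
        intro a
        have : g₁ * (g₂ * L a * g₂⁻¹) * g₁⁻¹ = L (g₁ (g₂ a)) := by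
          rw [ih₂ a]; exact ih₁ (g₂ a)
        calc g₁ * g₂ * L a * (g₁ * g₂)⁻¹
            = g₁ * (g₂ * L a * g₂⁻¹) * g₁⁻¹ := by group
          _ = L (g₁ (g₂ a)) := this
          _ = L ((g₁ * g₂) a) := rfl
    | inv g hg ih =>
        intro a
        have := ih (g⁻¹ a)
        have h2' : L a = g * L (g⁻¹ a) * g⁻¹ := by
          rw [this]; simp
        rw [h2']; group
  -- h ∈ G
  have hLmem : ∀ c, L c ∈ G := fun c => Subgroup.subset_closure ⟨c, hL c⟩
  have hhG : h ∈ G := by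
    rw [hh]
    refine list_prod_mem ?_
    intro x hx
    rw [List.mem_ofFn] at hx
    obtain ⟨i, rfl⟩ := hx
    exact zpow_mem (hLmem (w i)) (k i)
  -- L (h a) = L a
  have hLha : ∀ a, L (h a) = L a := by
    intro a
    have hα' : α (h a) a := hid w a
    have : op (h a) = op a := hlam _ _ hα'
    exact Equiv.ext fun x => by rw [hL, hL, this]
  -- h commutes with L a
  have hcomm : ∀ a, h * L a = L a * h := by
    intro a
    have := key h hhG a
    rw [hLha a] at this
    calc h * L a = h * L a * h⁻¹ * h := by group
      _ = L a * h := by rw [this]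
  -- h commutes with every g ∈ G
  have hcommG : ∀ g ∈ G, g * h = h * g := by
    intro g hg
    induction hg using Subgroup.closure_induction with
    | mem σ hσ =>
        obtain ⟨c, hc⟩ := hσ
        have hσL : σ = L c := Equiv.ext fun x => (hc x).trans (hL c x).symm
        rw [hσL]; exact (hcomm c).symm
    | one => simp
    | mul g₁ g₂ hg₁ hg₂ ih₁ ih₂ =>
        calc g₁ * g₂ * h = g₁ * (h * g₂) := by rw [mul_assoc, ih₂]
          _ = h * (g₁ * g₂) := by rw [← mul_assoc, ih₁, mul_assoc]
    | inv g hg ih =>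
        have : h * g = g * h := ih.symm
        calc g⁻¹ * h = g⁻¹ * h * g * g⁻¹ := by group
          _ = g⁻¹ * (h * g) * g⁻¹ := by group
          _ = g⁻¹ * (g * h) * g⁻¹ := by rw [this]
          _ = h * g⁻¹ := by group
  -- finish
  obtain ⟨x₀, hx₀⟩ := hfix
  intro x
  obtain ⟨g, hg, hgx⟩ := hconn x₀ x
  calc h x = h (g x₀) := by rw [hgx]
    _ = (h * g) x₀ := rfl
    _ = (g * h) x₀ := by rw [hcommG g hg]
    _ = g (h x₀) := rfl
    _ = g x₀ := by rw [hx₀]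
    _ = x := hgx
end

section
/- There is no nontrivial connected n-reductive quandle: if Q is a quandle on which the group generated by left translations acts transitively and Q satisfies the n-reductive law for some n ≥ 1, then Q has exactly one element. -/
namespace CRQT

variable {Q : Type*} (op : Q → Q → Q)

/-- The Cayley-kernel relation: same left translation. -/
def rel : Setoid Q :=
  ⟨fun u v => ∀ x, op u x = op v x,
   fun _ _ => rfl, fun h x => (h x).symm, fun h1 h2 x => (h1 x).trans (h2 x)⟩

theorem comp_well (hbij : ∀ a, Function.Bijective (op a))
    (hdist : ∀ x y z, op x (op y z) = op (op x y) (op x z))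
    (u u' x x' : Q) (hu : (rel op).r u u') (hx : (rel op).r x x') :
    (rel op).r (op u x) (op u' x') := by
  intro y
  obtain ⟨z, hz⟩ := (hbij u).2 y
  calc op (op u x) y = op (op u x) (op u z) := by rw [hz]
    _ = op u (op x z) := (hdist u x z).symm
    _ = op u' (op x' z) := by rw [hx z]; exact hu _
    _ = op (op u' x') (op u' z) := hdist u' x' z
    _ = op (op u' x') y := by rw [← hu z, hz]

variable (hbij : ∀ a, Function.Bijective (op a))
variable (hdist : ∀ x y z, op x (op y z) = op (op x y) (op x z))

/-- Induced operation on the quotient. -/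
def qop : Quotient (rel op) → Quotient (rel op) → Quotient (rel op) :=
  Quotient.map₂ op (fun _ _ hu _ _ hx => comp_well op hbij hdist _ _ _ _ hu hx)

theorem qop_mk (u x : Q) :
    qop op hbij hdist (Quotient.mk (rel op) u) (Quotient.mk (rel op) x)
      = Quotient.mk (rel op) (op u x) := rfl

theorem qop_foldl (l : List Q) (u : Q) :
    (l.map (Quotient.mk (rel op))).foldl (qop op hbij hdist) (Quotient.mk (rel op) u)
      = Quotient.mk (rel op) (l.foldl op u) := by
  induction l generalizing u with
  | nil => rfl
  | cons a t ih => simpa [qop_mk] using ih (op u a)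

/-- A connected projection quandle is trivial. -/
theorem proj_trivial {Q : Type*} [Nonempty Q] (op : Q → Q → Q)
    (hconn : ∀ a b : Q,
      ∃ g ∈ Subgroup.closure {σ : Equiv.Perm Q | ∃ c, ∀ x, σ x = op c x}, g a = b)
    (hproj : ∀ a b : Q, op a b = b) : ∃ a : Q, ∀ b : Q, b = a := by
  obtain ⟨a⟩ := ‹Nonempty Q›
  refine ⟨a, fun b => ?_⟩
  obtain ⟨g, hg, hga⟩ := hconn a b
  have key : ∀ g ∈ Subgroup.closure {σ : Equiv.Perm Q | ∃ c, ∀ x, σ x = op c x},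
      g a = a := by
    intro g hg
    induction hg using Subgroup.closure_induction with
    | mem σ hσ => obtain ⟨c, hc⟩ := hσ; rw [hc a, hproj]
    | one => rfl
    | mul x y _ _ hx hy => simp [Equiv.Perm.mul_apply, hy, hx]
    | inv x _ hx =>
      have : x⁻¹ (x a) = x⁻¹ a := by rw [hx]
      simpa using this.symm
  rw [← hga, key g hg]

theorem aux : ∀ (n : ℕ), 1 ≤ n → ∀ {Q : Type u} [Nonempty Q] (op : Q → Q → Q),
    (∀ a, Function.Bijective (op a)) →
    (∀ x y z, op x (op y z) = op (op x y) (op x z)) →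
    (∀ x : Q, op x x = x) →
    (∀ a b : Q,
      ∃ g ∈ Subgroup.closure {σ : Equiv.Perm Q | ∃ c, ∀ x, σ x = op c x}, g a = b) →
    (∀ (u v : Q) (l : List Q), l.length = n → l.foldl op u = l.foldl op v) →
    ∃ a : Q, ∀ b : Q, b = a := by
  intro n hn
  induction n, hn using Nat.le_induction with
  | base =>
    intro Q _ op hbij hdist hidem hconn hred
    refine proj_trivial op hconn fun u b => ?_
    have := hred u b [b] rfl
    simpa [hidem] using this
  | succ n hn ih =>
    intro Q _ op hbij hdist hidem hconn hred
    set s := rel op with hs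
    set mk := Quotient.mk (rel op) with hmk
    set qo := qop op hbij hdist with hqo
    -- bijectivity on the quotient
    have qbij : ∀ a, Function.Bijective (qo a) := by
      rintro ⟨a⟩
      constructor
      · rintro ⟨x⟩ ⟨y⟩ hxy
        have h' : s.r (op a x) (op a y) := Quotient.exact hxy
        refine Quotient.sound (fun w => ?_)
        have := h' (op a w)
        rw [← hdist, ← hdist] at this
        exact (hbij a).1 this
      · rintro ⟨b⟩
        obtain ⟨x, hx⟩ := (hbij a).2 b
        exact ⟨mk x, by rw [hmk]; exact congrArg mk hx⟩
    have qdist : ∀ x y z, qo x (qo y z) = qo (qo x y) (qo x z) := by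
      rintro ⟨x⟩ ⟨y⟩ ⟨z⟩
      exact congrArg mk (hdist x y z)
    have qidem : ∀ x, qo x x = x := by
      rintro ⟨x⟩
      exact congrArg mk (hidem x)
    have qconn : ∀ a b : Quotient s,
        ∃ g ∈ Subgroup.closure
          {σ : Equiv.Perm (Quotient s) | ∃ c, ∀ x, σ x = qo c x}, g a = b := by
      have key : ∀ g ∈ Subgroup.closure {σ : Equiv.Perm Q | ∃ c, ∀ x, σ x = op c x},
          ∃ h ∈ Subgroup.closure
            {σ : Equiv.Perm (Quotient s) | ∃ c, ∀ x, σ x = qo c x},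
            ∀ x : Q, h (mk x) = mk (g x) := by
        intro g hg
        induction hg using Subgroup.closure_induction with
        | mem σ hσ =>
          obtain ⟨c, hc⟩ := hσ
          refine ⟨Equiv.ofBijective (qo (mk c)) (qbij (mk c)),
            Subgroup.subset_closure ⟨mk c, fun x => rfl⟩, fun x => ?_⟩
          show qo (mk c) (mk x) = mk (σ x)
          rw [hc x]; rfl
        | one => exact ⟨1, one_mem _, fun x => rfl⟩
        | mul x y _ _ hx hy =>
          obtain ⟨h1, h1m, h1e⟩ := hx
          obtain ⟨h2, h2m, h2e⟩ := hy
          exact ⟨h1 * h2, mul_mem h1m h2m, fun w => by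
            simp only [Equiv.Perm.mul_apply, h2e, h1e]⟩
        | inv x _ hx =>
          obtain ⟨h1, h1m, h1e⟩ := hx
          refine ⟨h1⁻¹, inv_mem h1m, fun w => ?_⟩
          have : h1 (mk (x⁻¹ w)) = mk w := by rw [h1e]; simp
          rw [← this]; simp
      rintro ⟨a⟩ ⟨b⟩
      obtain ⟨g, hg, hga⟩ := hconn a b
      obtain ⟨h, hm, he⟩ := key g hg
      exact ⟨h, hm, (he a).trans (congrArg mk hga)⟩
    have qred : ∀ (u v : Quotient s) (l : List (Quotient s)), l.length = n →
        l.foldl qo u = l.foldl qo v := by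
      rintro ⟨u⟩ ⟨v⟩ l hl
      have hlist : l = (l.map Quotient.out).map mk := by
        rw [List.map_map]
        conv_lhs => rw [show l = l.map id from (List.map_id l).symm]
        exact List.map_congr_left fun x _ => (Quotient.out_eq x).symm
      rw [hlist]
      show (List.map mk (l.map Quotient.out)).foldl qo (mk u)
          = (List.map mk (l.map Quotient.out)).foldl qo (mk v)
      rw [hqo, hmk, qop_foldl, qop_foldl]
      refine Quotient.sound (fun y => ?_)
      have h1 := hred u v ((l.map Quotient.out) ++ [y]) (by simp [hl])
      simpa [List.foldl_append] using h1
    have : Nonempty (Quotient s) := Nonempty.map mk ‹_›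
    obtain ⟨a', ha'⟩ := ih qo qbij qdist qidem qconn qred
    have hproj : ∀ u x : Q, op u x = x := by
      intro u x
      have : mk u = mk x := (ha' (mk u)).trans (ha' (mk x)).symm
      have h' : s.r u x := Quotient.exact this
      rw [h' x, hidem]
    exact proj_trivial op hconn fun a b => hproj a b

end CRQT

/-- There is no nontrivial connected `n`-reductive quandle: if `Q` is a
nonempty connected quandle satisfying the `n`-reductive law for some `n ≥ 1`,
then `Q` has exactly one element. -/
theorem connected_reductive_quandle_trivial
    {Q : Type*} [Nonempty Q] (op : Q → Q → Q) (n : ℕ) (hn : 1 ≤ n)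
    (hbij : ∀ a, Function.Bijective (op a))
    (hdist : ∀ x y z, op x (op y z) = op (op x y) (op x z))
    (hidem : ∀ x : Q, op x x = x)
    -- Q is connected
    (hconn : ∀ a b : Q,
      ∃ g ∈ Subgroup.closure {σ : Equiv.Perm Q | ∃ c, ∀ x, σ x = op c x},
        g a = b)
    -- Q is n-reductive
    (hred : ∀ (u v : Q) (x : Fin n → Q),
      (List.ofFn x).foldl op u = (List.ofFn x).foldl op v) :
    ∃ a : Q, ∀ b : Q, b = a := by
  refine CRQT.aux n hn op hbij hdist hidem hconn ?_
  intro u v l hl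
  subst hl
  have := hred u v l.get
  rwa [List.ofFn_get] at this
end

section
/- Let G be a group, f an automorphism of G, and H a subgroup contained in Fix(f). Then the operation aH * bH = a f(a⁻¹ b) H on the coset space G/H is well-defined and, together with aH \ bH = a f⁻¹(a⁻¹ b) H, makes G/H into a quandle. -/
section
variable {G : Type*} [Group G] (H : Subgroup G)

private lemma coset_key (g : G ≃* G) (hg : ∀ h ∈ H, g h = h) :
    ∀ a a' b b' : G, a⁻¹ * a' ∈ H → b⁻¹ * b' ∈ H →
      (a * g (a⁻¹ * b))⁻¹ * (a' * g (a'⁻¹ * b')) ∈ H := by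
  intro a a' b b' hA hB
  have ea : a' = a * (a⁻¹ * a') := by group
  have eb : b' = b * (b⁻¹ * b') := by group
  set h := a⁻¹ * a' with hh
  set k := b⁻¹ * b' with hk
  have key : (a * g (a⁻¹ * b))⁻¹ * (a' * g (a'⁻¹ * b')) = k := by
    rw [ea, eb]
    have e1 : (a * h)⁻¹ * (b * k) = h⁻¹ * ((a⁻¹ * b) * k) := by group
    have e2 : g (h⁻¹ * ((a⁻¹ * b) * k)) = h⁻¹ * (g (a⁻¹ * b) * k) := by
      rw [map_mul, map_mul, map_inv, hg h hA, hg k hB]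
    rw [e1, e2]
    group
  rw [key]; exact hB

end

/-- Let `G` be a group, `f` an automorphism of `G` and `H ≤ Fix(f)` a subgroup.
Then `aH * bH = a f(a⁻¹b) H` is a well-defined operation on the left coset
space `G/H` which, together with `aH \ bH = a f⁻¹(a⁻¹b) H`, makes `G/H` a
quandle. -/
theorem coset_quandle
    {G : Type*} [Group G] (f : G ≃* G) (H : Subgroup G)
    (hH : ∀ h ∈ H, f h = h) :
    ∃ (op ld : G ⧸ H → G ⧸ H → G ⧸ H),
      (∀ a b : G, op ↑a ↑b = ↑(a * f (a⁻¹ * b))) ∧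
      (∀ a b : G, ld ↑a ↑b = ↑(a * f.symm (a⁻¹ * b))) ∧
      (∀ x y : G ⧸ H, op x (ld x y) = y) ∧
      (∀ x y : G ⧸ H, ld x (op x y) = y) ∧
      (∀ x y z : G ⧸ H, op x (op y z) = op (op x y) (op x z)) ∧
      (∀ x : G ⧸ H, op x x = x) := by
  have hH' : ∀ h ∈ H, f.symm h = h := fun h hh => by
    conv_lhs => rw [← hH h hh]
    exact f.symm_apply_apply h
  refine ⟨Quotient.map₂' (fun a b => a * f (a⁻¹ * b))
      (fun a a' hA b b' hB => ?_),
    Quotient.map₂' (fun a b => a * f.symm (a⁻¹ * b))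
      (fun a a' hA b b' hB => ?_), ?_, ?_, ?_, ?_, ?_, ?_⟩
  · rw [QuotientGroup.leftRel_apply] at hA hB ⊢
    exact coset_key H f hH a a' b b' hA hB
  · rw [QuotientGroup.leftRel_apply] at hA hB ⊢
    exact coset_key H f.symm hH' a a' b b' hA hB
  · intro a b; rfl
  · intro a b; rfl
  · intro x y
    induction x using QuotientGroup.induction_on with | _ a =>
    induction y using QuotientGroup.induction_on with | _ b =>
    show (↑(a * f (a⁻¹ * (a * f.symm (a⁻¹ * b)))) : G ⧸ H) = ↑b
    congr 1
    rw [inv_mul_cancel_left, f.apply_symm_apply]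
    group
  · intro x y
    induction x using QuotientGroup.induction_on with | _ a =>
    induction y using QuotientGroup.induction_on with | _ b =>
    show (↑(a * f.symm (a⁻¹ * (a * f (a⁻¹ * b)))) : G ⧸ H) = ↑b
    congr 1
    rw [inv_mul_cancel_left, f.symm_apply_apply]
    group
  · intro x y z
    induction x using QuotientGroup.induction_on with | _ a =>
    induction y using QuotientGroup.induction_on with | _ b =>
    induction z using QuotientGroup.induction_on with | _ c =>
    show (↑(a * f (a⁻¹ * (b * f (b⁻¹ * c)))) : G ⧸ H) =
      ↑((a * f (a⁻¹ * b)) * f ((a * f (a⁻¹ * b))⁻¹ * (a * f (a⁻¹ * c))))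
    congr 1
    have r1 : (a * f (a⁻¹ * b))⁻¹ * (a * f (a⁻¹ * c)) = f ((a⁻¹ * b)⁻¹ * (a⁻¹ * c)) := by
      simp only [map_mul, map_inv]; group
    have r2 : (a⁻¹ * b)⁻¹ * (a⁻¹ * c) = b⁻¹ * c := by group
    have r3 : a⁻¹ * (b * f (b⁻¹ * c)) = (a⁻¹ * b) * f (b⁻¹ * c) := by group
    rw [r1, r2, r3, map_mul, mul_assoc]
  · intro x
    induction x using QuotientGroup.induction_on with | _ a =>
    show (↑(a * f (a⁻¹ * a)) : G ⧸ H) = ↑a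
    rw [inv_mul_cancel, map_one, mul_one]
end
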